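/- Conversely, if γᵃpₐ and γᵃvₐ commute, where γᵃ satisfy the Clifford relations for the Minkowski metric and v is not null (η^{ab}vₐv_b ≠ 0), then p is parallel to v, i.e., there exists λ ∈ ℝ with pₐ = λvₐ for all a. -/
import Mathlib


open Matrix

/-- The Minkowski metric of signature (+,−,−,−). -/
noncomputable def minkEta (a b : Fin 4) : ℝ :=
  if a = b then (if a = 0 then 1 else -1) else 0

/-- If `γᵃpₐ` and `γᵃvₐ` commute, where the `γᵃ` satisfy the Minkowski Clifford relations and
`v` is not null, then `p` is parallel to `v`. -/
theorem clifford_commute_implies_parallel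
    {n : ℕ} (hn : 0 < n) (γ : Fin 4 → Matrix (Fin n) (Fin n) ℂ)
    (hγ : ∀ a b, γ a * γ b + γ b * γ a = ((2 * minkEta a b : ℝ) : ℂ) • (1 : Matrix (Fin n) (Fin n) ℂ))
    (p v : Fin 4 → ℝ)
    (hv : ∑ a, ∑ b, minkEta a b * v a * v b ≠ 0)
    (hcomm : Commute (∑ a, ((p a : ℂ)) • γ a) (∑ a, ((v a : ℂ)) • γ a)) :
    ∃ lam : ℝ, ∀ a, p a = lam * v a := by
  have one_ne : (1 : Matrix (Fin n) (Fin n) ℂ) ≠ 0 := by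
    intro h
    have := congrFun (congrFun h ⟨0, hn⟩) ⟨0, hn⟩
    simp [Matrix.one_apply] at this
  have key : ∀ (c d : Fin 4 → ℝ),
      (∑ a, ((c a : ℂ)) • γ a) * (∑ a, ((d a : ℂ)) • γ a)
      + (∑ a, ((d a : ℂ)) • γ a) * (∑ a, ((c a : ℂ)) • γ a)
      = ((∑ a, ∑ b, 2 * minkEta a b * c a * d b : ℝ) : ℂ) • (1 : Matrix (Fin n) (Fin n) ℂ) := by
    intro c d
    have h1 : (∑ a, ((c a : ℂ)) • γ a) * (∑ a, ((d a : ℂ)) • γ a)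
        = ∑ a, ∑ b, ((c a : ℂ) * (d b : ℂ)) • (γ a * γ b) := by
      rw [Finset.sum_mul]
      refine Finset.sum_congr rfl fun a _ => ?_
      rw [Finset.mul_sum]
      refine Finset.sum_congr rfl fun b _ => ?_
      rw [smul_mul_assoc, Matrix.mul_smul, smul_smul]
    have h2 : (∑ a, ((d a : ℂ)) • γ a) * (∑ a, ((c a : ℂ)) • γ a)
        = ∑ a, ∑ b, ((c a : ℂ) * (d b : ℂ)) • (γ b * γ a) := by
      rw [Finset.sum_mul]
      rw [Finset.sum_comm]
      refine Finset.sum_congr rfl fun a _ => ?_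
      rw [Finset.mul_sum]
      refine Finset.sum_congr rfl fun b _ => ?_
      rw [smul_mul_assoc, Matrix.mul_smul, smul_smul, mul_comm]
    rw [h1, h2, ← Finset.sum_add_distrib]
    rw [Complex.ofReal_sum, Finset.sum_smul]
    refine Finset.sum_congr rfl fun a _ => ?_
    rw [← Finset.sum_add_distrib, Complex.ofReal_sum, Finset.sum_smul]
    refine Finset.sum_congr rfl fun b _ => ?_
    rw [← smul_add, hγ a b, smul_smul]
    push_cast
    ring_nf
  set P := ∑ a, ((p a : ℂ)) • γ a with hP
  set V := ∑ a, ((v a : ℂ)) • γ a with hV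
  set s : ℝ := ∑ a, ∑ b, minkEta a b * p a * v b with hs
  set t : ℝ := ∑ a, ∑ b, minkEta a b * v a * v b with ht
  have hPV : P * V = ((s : ℝ) : ℂ) • 1 := by
    have := key p v
    rw [← hcomm] at this
    have hr : (∑ a, ∑ b, 2 * minkEta a b * p a * v b) = 2 * s := by
      rw [hs, Finset.mul_sum]
      refine Finset.sum_congr rfl fun a _ => ?_
      rw [Finset.mul_sum]
      exact Finset.sum_congr rfl fun b _ => by ring
    have h2 : (2 : ℂ) • (P * V) = ((2*s : ℝ) : ℂ) • 1 := by
      rw [two_smul, this, hr]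
    have := congrArg (fun M => ((2:ℂ)⁻¹) • M) h2
    simpa [smul_smul, mul_comm] using this
  have hVV : V * V = ((t : ℝ) : ℂ) • 1 := by
    have := key v v
    have hr : (∑ a, ∑ b, 2 * minkEta a b * v a * v b) = 2 * t := by
      rw [ht, Finset.mul_sum]
      refine Finset.sum_congr rfl fun a _ => ?_
      rw [Finset.mul_sum]
      exact Finset.sum_congr rfl fun b _ => by ring
    have h2 : (2 : ℂ) • (V * V) = ((2*t : ℝ) : ℂ) • 1 := by
      rw [two_smul, this, hr]
    have := congrArg (fun M => ((2:ℂ)⁻¹) • M) h2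
    simpa [smul_smul, mul_comm] using this
  -- t • P = s • V
  have hmain : ((t : ℝ) : ℂ) • P = ((s : ℝ) : ℂ) • V := by
    calc ((t : ℝ) : ℂ) • P = P * (V * V) := by rw [hVV]; simp [Matrix.mul_smul]
    _ = (P * V) * V := by rw [mul_assoc]
    _ = ((s : ℝ) : ℂ) • V := by rw [hPV]; simp [Matrix.smul_mul]
  -- so ∑ (t*p a - s*v a) • γ a = 0
  have hzero : ∑ a, (((t * p a - s * v a : ℝ) : ℂ)) • γ a = 0 := by
    rw [hP, hV, Finset.smul_sum, Finset.smul_sum] at hmain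
    rw [← sub_eq_zero, ← Finset.sum_sub_distrib] at hmain
    rw [← hmain]
    refine Finset.sum_congr rfl fun a _ => ?_
    rw [smul_smul, smul_smul, ← sub_smul]
    push_cast
    ring_nf
  -- componentwise vanishing
  have hcomp : ∀ b, t * p b - s * v b = 0 := by
    intro b
    have h := congrArg (fun M => γ b * M + M * γ b) hzero
    simp only [Finset.mul_sum, Finset.sum_mul, mul_zero, zero_mul, add_zero] at h
    rw [← Finset.sum_add_distrib] at h
    have h2 : ∑ a, (((t * p a - s * v a : ℝ) : ℂ)) • (((2 * minkEta b a : ℝ) : ℂ) • (1 : Matrix (Fin n) (Fin n) ℂ)) = 0 := by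
      rw [← h]
      refine Finset.sum_congr rfl fun a _ => ?_
      rw [Matrix.mul_smul, Matrix.smul_mul, ← smul_add, hγ b a]
    have h3 : (((t * p b - s * v b) * (2 * minkEta b b) : ℝ) : ℂ) • (1 : Matrix (Fin n) (Fin n) ℂ) = 0 := by
      rw [← h2]
      rw [Finset.sum_eq_single b]
      · rw [smul_smul]; push_cast; ring_nf
      · intro a _ hab
        have : minkEta b a = 0 := by simp [minkEta, hab.symm]
        simp [this]
      · simp
    have h4 : ((t * p b - s * v b) * (2 * minkEta b b) : ℝ) = 0 := by
      rcases smul_eq_zero.mp h3 with h | h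
      · exact_mod_cast h
      · exact absurd h one_ne
    have hη : minkEta b b ≠ 0 := by
      rcases eq_or_ne b 0 with h0 | h0 <;> simp [minkEta, h0]
    exact (mul_eq_zero.mp h4).resolve_right (mul_ne_zero two_ne_zero hη)
  refine ⟨s / t, fun a => ?_⟩
  have := hcomp a
  field_simp
  linarith [sub_eq_zero.mp (by linarith : t * p a - s * v a = 0)]
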